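/- Let α₁ be a positive even integer and α₂, α₃ positive odd integers. Define a := −(1/4)·α₁·(α₂ + α₃) + (1/8)·(α₃² − 1) and v := (1/4)·α₁·(α₂ + α₃) + (1/8)·(α₃² − 8·α₃ + 7). Then v − |a| is a nonnegative even integer; moreover if α₃ ∈ {1, 3} then v = |a|, and if α₁ = 2 and (α₂ = 1 or α₃ = 5) with α₃ ≥ 5 then v = |a| + 2. -/
import Mathlib


theorem stmt8 (α₁ α₂ α₃ : ℤ) (h1 : 0 < α₁) (h1e : Even α₁)
    (h2 : 0 < α₂) (h2o : Odd α₂) (h3 : 0 < α₃) (h3o : Odd α₃)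
    (a v : ℚ)
    (ha : a = -(1 / 4) * (α₁ : ℚ) * ((α₂ : ℚ) + α₃) + (1 / 8) * ((α₃ : ℚ) ^ 2 - 1))
    (hv : v = (1 / 4) * (α₁ : ℚ) * ((α₂ : ℚ) + α₃)
        + (1 / 8) * ((α₃ : ℚ) ^ 2 - 8 * α₃ + 7)) :
    (∃ m : ℤ, 0 ≤ m ∧ v - |a| = 2 * (m : ℚ)) ∧
    ((α₃ = 1 ∨ α₃ = 3) → v = |a|) ∧
    (α₁ = 2 → (α₂ = 1 ∨ α₃ = 5) → 5 ≤ α₃ → v = |a| + 2) := by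
  obtain ⟨k1, hk1⟩ := h1e
  obtain ⟨k2, hk2⟩ := h2o
  obtain ⟨k3, hk3⟩ := h3o
  have hk1' : (1:ℤ) ≤ k1 := by omega
  have hk2' : (0:ℤ) ≤ k2 := by omega
  have hk3' : (0:ℤ) ≤ k3 := by omega
  have haA : a = ((-2*k1*(k2+k3+1) + k3*(k3+1) : ℤ) : ℚ) / 2 := by
    rw [ha, hk1, hk2, hk3]; push_cast; ring
  have hvV : v = ((2*k1*(k2+k3+1) + k3*(k3-3) : ℤ) : ℚ) / 2 := by
    rw [hv, hk1, hk2, hk3]; push_cast; ring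
  refine ⟨?_, ?_, ?_⟩
  · rcases le_total a 0 with hle | hle
    · rw [abs_of_nonpos hle]
      have hev : Even (k3*(k3-1)) := by
        have := Int.even_mul_succ_self (k3-1)
        convert this using 1; ring
      obtain ⟨m, hm⟩ := hev
      have hnn : 0 ≤ k3*(k3-1) := by
        rcases (by omega : k3 = 0 ∨ 1 ≤ k3) with h | h
        · simp [h]
        · exact mul_nonneg hk3' (by omega)
      have hmn : 0 ≤ m := by
        have h2 : 0 ≤ m + m := hm ▸ hnn
        omega
      refine ⟨m, hmn, ?_⟩
      rw [haA, hvV]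
      have : ((k3*(k3-1) : ℤ) : ℚ) = ((m + m : ℤ) : ℚ) := by exact_mod_cast hm
      push_cast at this ⊢
      linarith
    · rw [abs_of_nonneg hle]
      refine ⟨k1*(k2+k3+1) - k3, by nlinarith, ?_⟩
      rw [haA, hvV]
      push_cast
      ring
  · intro h
    have hk30 : k3 = 0 ∨ k3 = 1 := by omega
    have hA : (-2*k1*(k2+k3+1) + k3*(k3+1) : ℤ) ≤ 0 := by
      rcases hk30 with h | h <;> subst h <;> nlinarith
    have hle : a ≤ 0 := by
      rw [haA]
      have : ((-2*k1*(k2+k3+1) + k3*(k3+1) : ℤ) : ℚ) ≤ 0 := by exact_mod_cast hA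
      exact div_nonpos_of_nonpos_of_nonneg this (by norm_num)
    rw [abs_of_nonpos hle, haA, hvV]
    have h0 : k3*(k3-1) = 0 := by rcases hk30 with h | h <;> subst h <;> ring
    have : ((k3*(k3-1) : ℤ) : ℚ) = 0 := by exact_mod_cast h0
    push_cast at this ⊢
    linarith
  · intro hα1 hcase hα3
    have hk11 : k1 = 1 := by omega
    have hk32 : 2 ≤ k3 := by omega
    rcases hcase with h | h
    · have hk20 : k2 = 0 := by omega
      subst hk11 hk20
      have hA : (0:ℤ) ≤ -2*1*(0+k3+1) + k3*(k3+1) := by nlinarith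
      have hle : 0 ≤ a := by
        rw [haA]
        have : (0:ℚ) ≤ ((-2*1*(0+k3+1) + k3*(k3+1) : ℤ) : ℚ) := by exact_mod_cast hA
        exact div_nonneg this (by norm_num)
      rw [abs_of_nonneg hle, haA, hvV]
      push_cast
      ring
    · have hk35 : k3 = 2 := by omega
      subst hk11 hk35
      have hA : (-2*1*(k2+2+1) + 2*(2+1) : ℤ) ≤ 0 := by nlinarith
      have hle : a ≤ 0 := by
        rw [haA]
        have : ((-2*1*(k2+2+1) + 2*(2+1) : ℤ) : ℚ) ≤ 0 := by exact_mod_cast hA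
        exact div_nonpos_of_nonpos_of_nonneg this (by norm_num)
      rw [abs_of_nonpos hle, haA, hvV]
      push_cast
      ring
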